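/- arXiv:2110.02574 — 3 statements merged into one kernel-verified Lean document; each statement's English description precedes it below -/
import Mathlib

section
/- Let X and Y be finite topological spaces and let f, g : X → Y be continuous maps such that f(x) ≤ g(x) for every x ∈ X, where ≤ is the specialization preorder on Y. Then f and g are homotopic. -/
/-- `minNhd x` is the intersection of all open sets containing `x`. -/
def minNhd {X : Type*} [TopologicalSpace X] (x : X) : Set X :=
  ⋂₀ {U : Set X | IsOpen U ∧ x ∈ U}

/-- If `f, g : X → Y` are continuous maps between finite topological spaces with
`f x ≤ g x` (in the specialization preorder of `Y`, i.e. `minNhd (f x) ⊆ minNhd (g x)`)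
for every `x`, then `f` and `g` are homotopic. -/
theorem homotopic_of_pointwise_le (X Y : Type*) [TopologicalSpace X]
    [TopologicalSpace Y] [Finite X] [Finite Y] (f g : C(X, Y))
    (h : ∀ x : X, minNhd (f x) ⊆ minNhd (g x)) :
    f.Homotopic g := by
  have key : ∀ x, ∀ U : Set Y, IsOpen U → g x ∈ U → f x ∈ U := by
    intro x U hU hg
    have hself : f x ∈ minNhd (f x) := by
      intro V hV; exact hV.2
    exact h x hself U ⟨hU, hg⟩
  refine ⟨⟨fun p : unitInterval × X => if p.1 = 1 then g p.2 else f p.2, ?_⟩, ?_, ?_⟩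
  · rw [continuous_def]
    intro U hU
    have heq : (fun p : unitInterval × X => if p.1 = 1 then g p.2 else f p.2) ⁻¹' U
        = {t : unitInterval | t ≠ 1} ×ˢ (f ⁻¹' U) ∪ Set.univ ×ˢ (g ⁻¹' U) := by
      ext ⟨t, x⟩
      by_cases ht : t = 1
      · simp [ht]
      · simp only [Set.mem_preimage, if_neg ht, Set.mem_union, Set.mem_prod,
          Set.mem_setOf_eq, Set.mem_univ, and_true]
        constructor
        · intro hf; exact Or.inl ⟨ht, hf⟩
        · rintro (⟨_, hf⟩ | hg)
          · exact hf
          · exact key x U hU hg.2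
    rw [heq]
    exact (isOpen_ne.prod (hU.preimage f.continuous)).union
      (isOpen_univ.prod (hU.preimage g.continuous))
  · intro x; simp
  · intro x; simp
end

section
/- Let f, g : X → Y be continuous maps between finite topological spaces. Then f is homotopic to g if and only if there exists a finite sequence of continuous maps f_0, f_1, ..., f_n : X → Y with f_0 = f, f_n = g, such that for every x ∈ X and every i < n, the values f_i(x) and f_{i+1}(x) are comparable in the specialization preorder of Y, with the comparisons alternating: f_0(x) ≤ f_1(x) ≥ f_2(x) ≤ ... (equivalently, consecutive maps are pointwise comparable). -/
open scoped unitInterval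

section aux

variable {X Y : Type*} [TopologicalSpace X] [TopologicalSpace Y]

lemma mem_minNhd_self (x : X) : x ∈ minNhd x := fun _U hU => hU.2

lemma minNhd_isOpen [Finite X] (x : X) : IsOpen (minNhd x) :=
  (Set.toFinite _).isOpen_sInter (fun _U hU => hU.1)

lemma mem_minNhd_of_subset {x y : X} (h : minNhd x ⊆ minNhd y) : x ∈ minNhd y :=
  h (mem_minNhd_self x)

lemma minNhd_subset_of_mem [Finite X] {x y : X} (h : x ∈ minNhd y) :
    minNhd x ⊆ minNhd y :=
  Set.sInter_subset_of_mem (t := minNhd y) ⟨minNhd_isOpen y, h⟩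

lemma mem_of_mem_minNhd {x y : X} {U : Set X} (h : x ∈ minNhd y) (hU : IsOpen U)
    (hyU : y ∈ U) : x ∈ U :=
  h U ⟨hU, hyU⟩

/-- If `f ≤ g` pointwise in the specialization preorder, then `f` and `g` are homotopic. -/
lemma homotopic_of_le [Finite Y] (f g : C(X, Y))
    (h : ∀ x, minNhd (f x) ⊆ minNhd (g x)) : f.Homotopic g := by
  refine ⟨⟨⟨fun p => if (p.1 : ℝ) < 1 then f p.2 else g p.2, ?_⟩, ?_, ?_⟩⟩
  · rw [continuous_def]
    intro U hU
    have key : (fun p : I × X => if (p.1 : ℝ) < 1 then f p.2 else g p.2) ⁻¹' U =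
        Set.univ ×ˢ (g ⁻¹' U) ∪ {t : I | (t : ℝ) < 1} ×ˢ (f ⁻¹' U) := by
      ext ⟨t, x⟩
      by_cases ht : (t : ℝ) < 1
      · simp only [Set.mem_preimage, if_pos ht, Set.mem_union, Set.mem_prod,
          Set.mem_univ, true_and, Set.mem_setOf_eq]
        constructor
        · intro hfx; exact Or.inr ⟨ht, hfx⟩
        · rintro (hgx | ⟨_, hfx⟩)
          · exact mem_of_mem_minNhd (mem_minNhd_of_subset (h x)) hU hgx
          · exact hfx
      · simp only [Set.mem_preimage, if_neg ht, Set.mem_union, Set.mem_prod,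
          Set.mem_univ, true_and, Set.mem_setOf_eq]
        constructor
        · intro hgx; exact Or.inl hgx
        · rintro (hgx | ⟨hlt, _⟩)
          · exact hgx
          · exact absurd hlt ht
    rw [key]
    exact (isOpen_univ.prod (hU.preimage g.continuous)).union
      (((isOpen_Iio).preimage continuous_subtype_val).prod (hU.preimage f.continuous))
  · intro x
    simp
  · intro x
    simp

lemma homotopic_of_fence_aux [Finite Y] :
    ∀ (n : ℕ) (F : ℕ → C(X, Y)),
      (∀ i < n,
        (∀ x : X, minNhd (F i x) ⊆ minNhd (F (i + 1) x)) ∨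
        (∀ x : X, minNhd (F (i + 1) x) ⊆ minNhd (F i x))) →
      (F 0).Homotopic (F n) := by
  intro n
  induction n with
  | zero => intro F _; exact ContinuousMap.Homotopic.refl _
  | succ n ih =>
    intro F hF
    have h1 : (F 0).Homotopic (F n) := ih F (fun i hi => hF i (hi.trans (Nat.lt_succ_self n)))
    have h2 : (F n).Homotopic (F (n + 1)) := by
      rcases hF n (Nat.lt_succ_self n) with h | h
      · exact homotopic_of_le _ _ h
      · exact (homotopic_of_le _ _ h).symm
    exact h1.trans h2

end aux

/-- Two continuous maps `f, g` between finite topological spaces are homotopic iff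
there is a finite sequence of continuous maps `f = f_0, f_1, ..., f_n = g` such that
consecutive maps are pointwise comparable in the specialization preorder of `Y`
(`y ≤ y'` iff `minNhd y ⊆ minNhd y'`). -/
theorem homotopic_iff_fence (X Y : Type*) [TopologicalSpace X] [TopologicalSpace Y]
    [Finite X] [Finite Y] (f g : C(X, Y)) :
    f.Homotopic g ↔
      ∃ (n : ℕ) (F : ℕ → C(X, Y)), F 0 = f ∧ F n = g ∧
        ∀ i < n,
          (∀ x : X, minNhd (F i x) ⊆ minNhd (F (i + 1) x)) ∨
          (∀ x : X, minNhd (F (i + 1) x) ⊆ minNhd (F i x)) := by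
  constructor
  · rintro ⟨H⟩
    -- the map `t ↦ H(·, t)` as a family of continuous maps
    set Ht : I → C(X, Y) := fun t =>
      ⟨fun x => H (t, x), H.continuous.comp (continuous_const.prodMk continuous_id)⟩ with hHt
    have hHt0 : Ht 0 = f := by ext x; simp [hHt]
    have hHt1 : Ht 1 = g := by ext x; simp [hHt]
    -- the set of times reachable by a fence from `f`
    set S : Set I := {t | ∃ (n : ℕ) (F : ℕ → C(X, Y)), F 0 = f ∧ F n = Ht t ∧
        ∀ i < n,
          (∀ x : X, minNhd (F i x) ⊆ minNhd (F (i + 1) x)) ∨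
          (∀ x : X, minNhd (F (i + 1) x) ⊆ minNhd (F i x))} with hS
    -- the neighborhood trick
    have hV : ∀ t : I, ∃ V : Set I, IsOpen V ∧ t ∈ V ∧
        ∀ s ∈ V, ∀ x : X, minNhd (Ht s x) ⊆ minNhd (Ht t x) := by
      intro t
      refine ⟨⋂ x : X, (fun s : I => H (s, x)) ⁻¹' minNhd (H (t, x)), ?_, ?_, ?_⟩
      · exact isOpen_iInter_of_finite fun x =>
          (minNhd_isOpen _).preimage (H.continuous.comp (continuous_id.prodMk continuous_const))
      · exact Set.mem_iInter.2 fun x => mem_minNhd_self _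
      · intro s hs x
        exact minNhd_subset_of_mem (Set.mem_iInter.1 hs x)
    -- snoc lemma for fences
    have snoc : ∀ (a b : C(X, Y)), (∃ (n : ℕ) (F : ℕ → C(X, Y)), F 0 = f ∧ F n = a ∧
        ∀ i < n,
          (∀ x : X, minNhd (F i x) ⊆ minNhd (F (i + 1) x)) ∨
          (∀ x : X, minNhd (F (i + 1) x) ⊆ minNhd (F i x))) →
        ((∀ x : X, minNhd (a x) ⊆ minNhd (b x)) ∨
          (∀ x : X, minNhd (b x) ⊆ minNhd (a x))) →
        (∃ (n : ℕ) (F : ℕ → C(X, Y)), F 0 = f ∧ F n = b ∧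
        ∀ i < n,
          (∀ x : X, minNhd (F i x) ⊆ minNhd (F (i + 1) x)) ∨
          (∀ x : X, minNhd (F (i + 1) x) ⊆ minNhd (F i x))) := by
      rintro a b ⟨n, F, hF0, hFn, hF⟩ hab
      refine ⟨n + 1, fun i => if i = n + 1 then b else F i, ?_, ?_, ?_⟩
      · simp [hF0]
      · simp
      · intro i hi
        rcases Nat.lt_succ_iff_lt_or_eq.1 hi with hi' | rfl
        · have h1 : i ≠ n + 1 := by omega
          have h2 : i + 1 ≠ n + 1 := by omega
          simpa [h1, h2, show i ≠ n by omega] using hF i hi'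
        · simpa [Nat.succ_ne_self, hFn] using hab
    have hSopen : IsOpen S := by
      rw [isOpen_iff_forall_mem_open]
      intro t ht
      obtain ⟨V, hVopen, htV, hVsub⟩ := hV t
      refine ⟨V, ?_, hVopen, htV⟩
      intro s hs
      exact snoc (Ht t) (Ht s) ht (Or.inr (hVsub s hs))
    have hSclosed : IsClosed S := by
      rw [← isOpen_compl_iff, isOpen_iff_forall_mem_open]
      intro t ht
      obtain ⟨V, hVopen, htV, hVsub⟩ := hV t
      refine ⟨V, ?_, hVopen, htV⟩
      intro s hs hsS
      exact ht (snoc (Ht s) (Ht t) hsS (Or.inl (hVsub s hs)))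
    have h0 : (0 : I) ∈ S := by
      refine ⟨0, fun _ => f, rfl, by rw [hHt0], fun i hi => absurd hi (Nat.not_lt_zero i)⟩
    have hSuniv : S = Set.univ := IsClopen.eq_univ (s := S) ⟨hSclosed, hSopen⟩ ⟨0, h0⟩
    have h1 : (1 : I) ∈ S := hSuniv ▸ Set.mem_univ _
    obtain ⟨n, F, hF0, hFn, hF⟩ := h1
    exact ⟨n, F, hF0, by rw [hFn, hHt1], hF⟩
  · rintro ⟨n, F, hF0, hFn, hF⟩
    have := homotopic_of_fence_aux n F hF
    rwa [hF0, hFn] at this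
end

section
/- Let X be a finite topological space and let U be a basis-like open cover of X. Then for every x ∈ X there exists a minimum element of U containing U_x, i.e., an element p(U_x) ∈ U with U_x ⊆ p(U_x) such that p(U_x) ⊆ V for every V ∈ U with U_x ⊆ V. Moreover the resulting map p : B(X) → U is order-preserving with respect to set inclusion: U_x ⊆ U_y implies p(U_x) ⊆ p(U_y). -/
/-- `𝒰` is a basis-like open cover: an open cover such that whenever `x ∈ u ∩ v` with
`u, v ∈ 𝒰` there is `w ∈ 𝒰` with `x ∈ w ⊆ u ∩ v`. -/
def IsBasisLikeCover {X : Type*} [TopologicalSpace X] (𝒰 : Set (Set X)) : Prop :=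
  (∀ u ∈ 𝒰, IsOpen u) ∧ ⋃₀ 𝒰 = Set.univ ∧
    ∀ u ∈ 𝒰, ∀ v ∈ 𝒰, ∀ x ∈ u ∩ v, ∃ w ∈ 𝒰, x ∈ w ∧ w ⊆ u ∩ v

theorem mem_minNhd {X : Type*} [TopologicalSpace X] (x : X) : x ∈ minNhd x := by
  intro U hU; exact hU.2

theorem minNhd_subset {X : Type*} [TopologicalSpace X] {x : X} {V : Set X}
    (hV : IsOpen V) (hx : x ∈ V) : minNhd x ⊆ V :=
  Set.sInter_subset_of_mem ⟨hV, hx⟩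

/-- Let `X` be a finite topological space and `𝒰` a basis-like open cover. Then for
every `x` there is a minimum member of `𝒰` containing `minNhd x`, and the resulting
assignment `p` is order-preserving: `minNhd x ⊆ minNhd y → p x ⊆ p y`. -/
theorem exists_min_member_and_monotone (X : Type*) [TopologicalSpace X] [Finite X]
    (𝒰 : Set (Set X)) (h𝒰 : IsBasisLikeCover 𝒰) :
    ∃ p : X → Set X,
      (∀ x : X, p x ∈ 𝒰 ∧ minNhd x ⊆ p x ∧ ∀ V ∈ 𝒰, minNhd x ⊆ V → p x ⊆ V) ∧
      (∀ x y : X, minNhd x ⊆ minNhd y → p x ⊆ p y) := by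
  obtain ⟨hopen, hcov, hbl⟩ := h𝒰
  have key : ∀ x : X, ∃ w ∈ 𝒰, x ∈ w ∧ ∀ V ∈ 𝒰, x ∈ V → w ⊆ V := by
    intro x
    have hx : x ∈ ⋃₀ 𝒰 := by rw [hcov]; trivial
    obtain ⟨u0, hu0, hxu0⟩ := hx
    have haux : ∀ S : Set (Set X), S.Finite → S ⊆ 𝒰 →
        ∃ w ∈ 𝒰, x ∈ w ∧ ∀ V ∈ S, x ∈ V → w ⊆ V := by
      intro S hS
      refine Set.Finite.induction_on
        (motive := fun S _ => S ⊆ 𝒰 → ∃ w ∈ 𝒰, x ∈ w ∧ ∀ V ∈ S, x ∈ V → w ⊆ V) S hS ?_ ?_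
      · intro _; exact ⟨u0, hu0, hxu0, fun V hV => absurd hV (by simp)⟩
      · intro a s ha hSfin ih hsub
        obtain ⟨w, hw𝒰, hxw, hwmin⟩ := ih (fun V hV => hsub (Set.mem_insert_of_mem a hV))
        by_cases hxa : x ∈ a
        · have ha𝒰 : a ∈ 𝒰 := hsub (Set.mem_insert a s)
          obtain ⟨w', hw'𝒰, hxw', hw'sub⟩ := hbl w hw𝒰 a ha𝒰 x ⟨hxw, hxa⟩
          refine ⟨w', hw'𝒰, hxw', ?_⟩
          intro V hV hxV
          rcases hV with rfl | hV
          · exact fun y hy => (hw'sub hy).2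
          · exact fun z hz => hwmin V hV hxV (hw'sub hz).1
        · refine ⟨w, hw𝒰, hxw, ?_⟩
          intro V hV hxV
          rcases hV with rfl | hV
          · exact absurd hxV hxa
          · exact hwmin V hV hxV
    obtain ⟨w, h1, h2, h3⟩ := haux 𝒰 (Set.toFinite 𝒰) subset_rfl
    exact ⟨w, h1, h2, h3⟩
  choose p hp𝒰 hpx hpmin using key
  refine ⟨p, fun x => ⟨hp𝒰 x, ?_, ?_⟩, ?_⟩
  · exact minNhd_subset (hopen _ (hp𝒰 x)) (hpx x)
  · intro V hV hVsub
    exact hpmin x V hV (hVsub (mem_minNhd x))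
  · intro x y hxy
    have hxpy : x ∈ p y := hxy (mem_minNhd x) _ ⟨hopen _ (hp𝒰 y), hpx y⟩
    exact hpmin x (p y) (hp𝒰 y) hxpy
end
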